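/- arXiv:1401.7189 — 5 statements merged into one kernel-verified Lean document; each statement's English description precedes it below -/
import Mathlib

section
/- For all integers a, b and positive integer c, if gcd(a,c) > 1 and gcd(a,c) does not divide b, then the quadratic Gauss sum G(a,b,c) = sum_{n=0}^{c-1} e^{2πi(an²+bn)/c} equals 0. -/
/-!
With `d = gcd(a, c)` and `c = d m`, the substitution `n ↦ n + m` permutes the residues mod `c`,
and since `c ∣ a m` it multiplies every term by `exp(2πi b m / c) = exp(2πi b / d)`,
which is not `1` because `d ∤ b`. A sum fixed by multiplication by a number `≠ 1` is `0`.
-/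

open Complex Finset

theorem Fintype.sum_eq_zero_of_add_eq_mul {G R : Type*} [AddGroup G] [Fintype G] [Ring R]
    [NoZeroDivisors R] {f : G → R} {t : G} {ζ : R} (hζ : ζ ≠ 1)
    (hf : ∀ x, f (x + t) = ζ * f x) : ∑ x, f x = 0 := by
  have hfix : ∑ x, f x = ζ * ∑ x, f x := by
    rw [mul_sum, ← Equiv.sum_comp (Equiv.addRight t)]
    exact Finset.sum_congr rfl fun x _ ↦ hf x
  have : (ζ - 1) * ∑ x, f x = 0 := by rw [sub_mul, one_mul, ← hfix, sub_self]
  exact (mul_eq_zero.1 this).resolve_left (sub_ne_zero.2 hζ)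

namespace AddChar

variable {R S : Type*} [CommRing R] [CommRing S]

lemma map_quadratic_add_of_mul_eq_zero (ψ : AddChar R S) {a t : R} (b : R) (hat : a * t = 0)
    (x : R) : ψ (a * (x + t) ^ 2 + b * (x + t)) = ψ (b * t) * ψ (a * x ^ 2 + b * x) := by
  have : a * (x + t) ^ 2 + b * (x + t) = b * t + (a * x ^ 2 + b * x) + a * t * (2 * x + t) := by
    ring
  rw [this, hat, zero_mul, add_zero, map_add_eq_mul]

lemma sum_quadratic_eq_zero_of_mul_eq_zero [Fintype R] [IsDomain S] (ψ : AddChar R S)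
    {a t : R} (b : R) (hat : a * t = 0) (hbt : ψ (b * t) ≠ 1) :
    ∑ x, ψ (a * x ^ 2 + b * x) = 0 :=
  Fintype.sum_eq_zero_of_add_eq_mul hbt (ψ.map_quadratic_add_of_mul_eq_zero b hat)

end AddChar

namespace ZMod

lemma sum_range_natCast {M : Type*} [AddCommMonoid M] (c : ℕ) [NeZero c] (f : ZMod c → M) :
    ∑ n ∈ range c, f n = ∑ x, f x := by
  refine sum_nbij' (↑) val (fun _ _ ↦ mem_univ _) (fun x _ ↦ mem_range.2 x.val_lt)
    (fun n hn ↦ val_natCast_of_lt (mem_range.1 hn)) (fun x _ ↦ natCast_zmod_val x) fun _ _ ↦ rfl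

variable {c : ℕ} [NeZero c]

lemma stdAddChar_eq_one_iff {x : ZMod c} : stdAddChar x = 1 ↔ x = 0 := by
  rw [← (stdAddChar (N := c)).map_zero_eq_one, injective_stdAddChar.eq_iff]

theorem sum_stdAddChar_quadratic_eq_zero (a b : ℤ) (h : ¬ (Int.gcd a c : ℤ) ∣ b) :
    ∑ x : ZMod c, stdAddChar ((a : ZMod c) * x ^ 2 + (b : ZMod c) * x) = 0 := by
  have hda : (Int.gcd a c : ℤ) ∣ a := Int.gcd_dvd_left a c
  obtain ⟨m, hm⟩ := Int.gcd_dvd_right a c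
  generalize (Int.gcd a c : ℤ) = d at h hda hm
  have hm0 : m ≠ 0 := by rintro rfl; simp [NeZero.ne c] at hm
  refine stdAddChar.sum_quadratic_eq_zero_of_mul_eq_zero (t := (m : ZMod c)) _ ?_ ?_
  · rw [← Int.cast_mul, intCast_zmod_eq_zero_iff_dvd, hm]
    exact mul_dvd_mul_right hda m
  · rwa [Ne, stdAddChar_eq_one_iff, ← Int.cast_mul, intCast_zmod_eq_zero_iff_dvd, hm,
      mul_dvd_mul_iff_right hm0]

end ZMod

theorem gauss_sum_vanish_gcd_general (a b : ℤ) (c : ℕ) (hc : 0 < c)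
    (h2 : ¬ ((Int.gcd a (c : ℤ) : ℤ) ∣ b)) :
    ∑ n ∈ Finset.range c,
      Complex.exp (2 * Real.pi * I * ((a : ℂ) * (n : ℂ) ^ 2 + (b : ℂ) * (n : ℂ)) / (c : ℂ)) = 0 := by
  have : NeZero c := ⟨hc.ne'⟩
  have hterm (n : ℕ) : exp (2 * Real.pi * I * ((a : ℂ) * (n : ℂ) ^ 2 + (b : ℂ) * (n : ℂ)) / c) =
      ZMod.stdAddChar ((a : ZMod c) * (n : ZMod c) ^ 2 + (b : ZMod c) * (n : ZMod c)) := by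
    have := ZMod.stdAddChar_coe (N := c) (a * n ^ 2 + b * n)
    push_cast at this
    exact this.symm
  simp_rw [hterm]
  exact (ZMod.sum_range_natCast c _).trans (ZMod.sum_stdAddChar_quadratic_eq_zero a b h2)

theorem gauss_sum_vanish_gcd (a b : ℤ) (c : ℕ) (hc : 0 < c)
    (h1 : 1 < Int.gcd a (c : ℤ)) (h2 : ¬ ((Int.gcd a (c : ℤ) : ℤ) ∣ b)) :
    ∑ n ∈ Finset.range c,
      Complex.exp (2 * Real.pi * I * ((a : ℂ) * (n : ℂ) ^ 2 + (b : ℂ) * (n : ℂ)) / (c : ℂ)) = 0 :=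
  gauss_sum_vanish_gcd_general a b c hc h2
end

section
/- For all integers a, b and positive integer c, if c ≡ 0 (mod 4) and b is odd, then the quadratic Gauss sum G(a,b,c) = sum_{n=0}^{c-1} e^{2πi(an²+bn)/c} equals 0. -/
/-!
Write `c = 4k`. Shifting `n` by `c / 2 = 2k` changes `(a n² + b n) / c` by `a n + a k + b / 2`,
an integer plus `1/2` because `b` is odd, so the summand is antiperiodic with antiperiod `2k`
and the two halves of the sum cancel.
-/

open Complex

theorem Function.Antiperiodic.sum_range_two_mul_eq_zero {M : Type*} [AddCommGroup M]
    {f : ℕ → M} {m : ℕ} (hf : Function.Antiperiodic f m) :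
    ∑ n ∈ Finset.range (2 * m), f n = 0 := by
  simp [two_mul, Finset.sum_range_add, add_comm m, hf _]

theorem gaussSum_summand_antiperiodic (a : ℤ) {b : ℤ} {k : ℕ} (hk : k ≠ 0) (hb : Odd b) :
    Function.Antiperiodic
      (fun n : ℕ => exp (2 * Real.pi * I * ((a : ℂ) * (n : ℂ) ^ 2 + (b : ℂ) * (n : ℂ)) /
        ((4 * k : ℕ) : ℂ)))
      (2 * k : ℕ) := by
  obtain ⟨j, rfl⟩ := hb
  intro n
  have hkC : (k : ℂ) ≠ 0 := Nat.cast_ne_zero.mpr hk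
  have hshift : 2 * (Real.pi : ℂ) * I * ((a : ℂ) * ((n + 2 * k : ℕ) : ℂ) ^ 2 +
        ((2 * j + 1 : ℤ) : ℂ) * ((n + 2 * k : ℕ) : ℂ)) / ((4 * k : ℕ) : ℂ) =
      2 * (Real.pi : ℂ) * I * ((a : ℂ) * (n : ℂ) ^ 2 + ((2 * j + 1 : ℤ) : ℂ) * (n : ℂ)) /
          ((4 * k : ℕ) : ℂ) +
        ((a * n + a * k + j : ℤ) : ℂ) * (2 * Real.pi * I) + Real.pi * I := by
    push_cast
    field_simp
    ring
  dsimp only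
  rw [hshift, exp_add_pi_mul_I, exp_add, exp_int_mul_two_pi_mul_I, mul_one]

theorem gauss_sum_vanish_four_general (a b : ℤ) (c : ℕ)
    (h4 : c % 4 = 0) (hb : Odd b) :
    ∑ n ∈ Finset.range c,
      Complex.exp (2 * Real.pi * I * ((a : ℂ) * (n : ℂ) ^ 2 + (b : ℂ) * (n : ℂ)) / (c : ℂ)) = 0 := by
  obtain ⟨k, rfl⟩ := Nat.dvd_of_mod_eq_zero h4
  rcases eq_or_ne k 0 with rfl | hk
  · simp
  have h := (gaussSum_summand_antiperiodic a hk hb).sum_range_two_mul_eq_zero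
  rwa [show 2 * (2 * k) = 4 * k by ring] at h

theorem gauss_sum_vanish_four (a b : ℤ) (c : ℕ) (hc : 0 < c)
    (h4 : c % 4 = 0) (hb : Odd b) :
    ∑ n ∈ Finset.range c,
      Complex.exp (2 * Real.pi * I * ((a : ℂ) * (n : ℂ) ^ 2 + (b : ℂ) * (n : ℂ)) / (c : ℂ)) = 0 :=
  gauss_sum_vanish_four_general a b c h4 hb
end

section
/- For N an even positive integer with N ≥ 4, the determinant of the (N/2−1)×(N/2−1) matrix whose (k,ℓ) entry is (2(−i)^{3/2}/√N)·sin(2πℓk/N), for 1 ≤ k, ℓ ≤ N/2−1, equals (−i)^{(N−1)(N−2)/4}. -/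
/-!
With `n = N / 2`, the matrix is `(-i)^{3/2}` times `√(2/n) · (sin (π k ℓ / n))_{0<k,ℓ<n}`, which is
orthogonal by the discrete orthogonality of sines, so its determinant is `±1`. The sign comes
from `sin (ℓ θ) = sin θ · U_{ℓ-1}(cos θ)`: the sine matrix is a positive diagonal times a
Chebyshev-`U` matrix, whose determinant is a positive multiple of the Vandermonde determinant of
the decreasing nodes `cos (π k / n)`, of sign `(-1)^(n-1 choose 2)`. Writing `-1` and `(-i)^{3/2}`
as powers of `e^{-iπ/4}` gives the exponent `(N-1)(N-2)/4`.
-/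

open Complex Finset Matrix Polynomial Polynomial.Chebyshev
open scoped Real

namespace Real

theorem two_mul_sin_half_mul_sum_range_cos (x : ℝ) (n : ℕ) :
    2 * sin (x / 2) * ∑ k ∈ range n, cos (k * x) = sin ((n - 1 / 2) * x) + sin (x / 2) := by
  induction n with
  | zero =>
    rw [sum_range_zero, mul_zero, Nat.cast_zero, zero_sub, neg_mul, sin_neg]
    ring_nf
  | succ n ih =>
    rw [sum_range_succ, mul_add, ih, two_mul_sin_mul_cos, ← neg_sub (n * x), sin_neg]
    push_cast
    ring_nf

theorem sum_range_cos_mul_int_mul_pi_div (n : ℕ) (m : ℤ) (hm : sin (m * π / (2 * n)) ≠ 0) :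
    ∑ k ∈ range n, cos (k * (m * π / n)) = (1 - (-1) ^ m) / 2 := by
  have hn : (n : ℝ) ≠ 0 := by
    rintro hn
    simp [hn] at hm
  have key := two_mul_sin_half_mul_sum_range_cos (m * π / n) n
  rw [show (n - 1 / 2) * (m * π / n) = m * π - m * π / (2 * n) by field_simp,
    sin_int_mul_pi_sub, show m * π / n / 2 = m * π / (2 * n) by ring] at key
  apply mul_left_cancel₀ (mul_ne_zero two_ne_zero hm)
  linear_combination key

theorem sin_int_mul_pi_div_ne_zero {n : ℕ} {m : ℤ} (hm : m ≠ 0) (hmn : |m| < 2 * n) :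
    sin (m * π / (2 * n)) ≠ 0 := by
  have hn : (0 : ℝ) < 2 * n := by
    have : (0 : ℤ) < 2 * n := (abs_nonneg m).trans_lt hmn
    exact_mod_cast this
  have hmn' : |(m : ℝ)| < 2 * n := by exact_mod_cast hmn
  rw [Ne, sin_eq_zero_iff_of_lt_of_lt, div_eq_zero_iff]
  · simp [hm, pi_ne_zero, hn.ne']
  · rw [lt_div_iff₀ hn]
    nlinarith [abs_lt.mp hmn', pi_pos]
  · rw [div_lt_iff₀ hn]
    nlinarith [abs_lt.mp hmn', pi_pos]

theorem sum_range_sin_mul_sin {n a b : ℕ} (ha : 0 < a) (han : a < n) (hb : 0 < b) (hbn : b < n) :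
    ∑ k ∈ range n, sin (k * (a * π / n)) * sin (k * (b * π / n)) =
      if a = b then (n : ℝ) / 2 else 0 := by
  have hcos (m : ℤ) (hm : m ≠ 0) (hmn : |m| < 2 * n) :=
    sum_range_cos_mul_int_mul_pi_div n m (sin_int_mul_pi_div_ne_zero hm hmn)
  have hterm (k : ℕ) : sin (k * (a * π / n)) * sin (k * (b * π / n)) =
      (cos (k * (((a - b : ℤ) : ℝ) * π / n)) -
        cos (k * (((a + b : ℤ) : ℝ) * π / n))) / 2 := by
    have := two_mul_sin_mul_sin (k * (a * π / n)) (k * (b * π / n))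
    push_cast
    rw [show k * ((a - b) * π / n) = k * (a * π / n) - k * (b * π / n) by ring,
      show k * ((a + b) * π / n) = k * (a * π / n) + k * (b * π / n) by ring]
    linarith
  simp only [hterm, ← sum_div, sum_sub_distrib]
  rw [hcos (a + b) (by omega) (by rw [abs_lt]; omega)]
  split_ifs with hab
  · subst hab
    simp only [sub_self, Int.cast_zero, zero_mul, zero_div, mul_zero, cos_zero, sum_const,
      card_range, nsmul_eq_mul, mul_one, Even.neg_one_zpow ⟨a, rfl⟩]
    ring
  · rw [hcos (a - b) (by omega) (by rw [abs_lt]; omega),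
      show (a + b : ℤ) = (a - b) + 2 * b by ring, zpow_add₀ (by norm_num),
      (even_two_mul (b : ℤ)).neg_one_zpow, mul_one, sub_self, zero_div]

theorem natCast_mul_pi_div_mem_Ioo {k n : ℕ} (hk : 0 < k) (hkn : k < n) :
    (k * π / n) ∈ Set.Ioo 0 π := by
  have hn : (0 : ℝ) < n := by exact_mod_cast hk.trans hkn
  have hkn' : (k : ℝ) < n := by exact_mod_cast hkn
  constructor
  · positivity
  · rw [div_lt_iff₀ hn]
    nlinarith [pi_pos]

end Real

theorem Fin.sum_card_Ioi (n : ℕ) : ∑ i : Fin n, #(Ioi i) = n.choose 2 := by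
  simp only [Fin.card_Ioi]
  rw [Fin.sum_univ_eq_sum_range (fun i => n - 1 - i), sum_range_reflect (fun i => i),
    sum_range_id, Nat.choose_two_right]

theorem Fin.sum_univ_pred_succ_eq_sum_range {M : Type*} [AddCommMonoid M] {f : ℕ → M}
    (hf : f 0 = 0) (n : ℕ) : ∑ k : Fin (n - 1), f (k + 1) = ∑ k ∈ range n, f k := by
  cases n with
  | zero => simp
  | succ n => rw [sum_range_succ', hf, add_zero, ← Fin.sum_univ_eq_sum_range, Nat.add_sub_cancel]

namespace Matrix

theorem det_eval_matrixOfPolynomials_eq_det_vandermonde_mul_prod_leadingCoeff {R : Type*}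
    [CommRing R] {n : ℕ} (v : Fin n → R) (p : Fin n → R[X])
    (h_deg : ∀ i, (p i).natDegree = i) :
    (of fun i j => (p j).eval (v i)).det = (vandermonde v).det * ∏ i, (p i).leadingCoeff := by
  have h_le i : (p i).natDegree ≤ i := (h_deg i).le
  rw [eval_matrixOfPolynomials_eq_vandermonde_mul_matrixOfPolynomials v p h_le, det_mul,
    det_of_isUpperTriangular (matrixOfPolynomials_blockTriangular p h_le)]
  congr 1
  refine prod_congr rfl fun i _ => ?_
  rw [of_apply, ← coeff_natDegree, h_deg]

theorem det_eval_chebyshevU {R : Type*} [CommRing R] [IsDomain R] [NeZero (2 : R)] {n : ℕ}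
    (v : Fin n → R) :
    (of fun i j : Fin n => (U R j).eval (v i)).det =
      (vandermonde v).det * ∏ j : Fin n, 2 ^ (j : ℕ) := by
  rw [det_eval_matrixOfPolynomials_eq_det_vandermonde_mul_prod_leadingCoeff v _
    (fun j => natDegree_U_natCast R j)]
  simp only [leadingCoeff_U_natCast]

theorem neg_one_pow_mul_det_vandermonde_pos {R : Type*} [CommRing R] [LinearOrder R]
    [IsStrictOrderedRing R] {n : ℕ} {v : Fin n → R} (hv : StrictAnti v) :
    0 < (-1) ^ n.choose 2 * (vandermonde v).det := by
  have hneg : (vandermonde v).det = (-1) ^ n.choose 2 * ∏ i, ∏ j ∈ Ioi i, (v i - v j) := by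
    rw [det_vandermonde, ← Fin.sum_card_Ioi, ← prod_pow_eq_pow_sum, ← prod_mul_distrib]
    refine prod_congr rfl fun i _ => ?_
    rw [← prod_const, ← prod_mul_distrib]
    exact prod_congr rfl fun j _ => by ring
  rw [hneg, ← mul_assoc, ← pow_add, Even.neg_one_pow ⟨_, rfl⟩, one_mul]
  exact prod_pos fun i _ => prod_pos fun j hj => sub_pos.mpr (hv (mem_Ioi.mp hj))

end Matrix

noncomputable def sineMatrix (n : ℕ) : Matrix (Fin (n - 1)) (Fin (n - 1)) ℝ :=
  of fun k ℓ => Real.sin ((ℓ + 1 : ℕ) * ((k + 1 : ℕ) * π / n))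

theorem sineMatrix_transpose_mul_self (n : ℕ) :
    (sineMatrix n)ᵀ * sineMatrix n = ((n : ℝ) / 2) • 1 := by
  ext a b
  have key := Real.sum_range_sin_mul_sin (n := n) (a := a + 1) (b := b + 1)
    (by omega) (by omega) (by omega) (by omega)
  rw [← Fin.sum_univ_pred_succ_eq_sum_range (by simp)] at key
  simp only [Nat.add_right_cancel_iff, ← Fin.ext_iff] at key
  rw [mul_apply, Matrix.smul_apply, one_apply]
  simp only [transpose_apply, sineMatrix, of_apply, smul_eq_mul, mul_ite, mul_one, mul_zero]
  convert key using 4 with j <;> ring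

theorem det_sineMatrix_sq (n : ℕ) : (sineMatrix n).det ^ 2 = ((n : ℝ) / 2) ^ (n - 1) := by
  have h := congrArg det (sineMatrix_transpose_mul_self n)
  rwa [det_mul, det_transpose, det_smul, det_one, Fintype.card_fin, mul_one, ← sq] at h

theorem sineMatrix_eq_sin_mul_eval_U (n : ℕ) :
    sineMatrix n = of fun k ℓ : Fin (n - 1) =>
      Real.sin ((k + 1 : ℕ) * π / n) * (U ℝ ℓ).eval (Real.cos ((k + 1 : ℕ) * π / n)) := by
  ext k ℓ
  rw [of_apply, mul_comm, U_real_cos, sineMatrix, of_apply]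
  push_cast
  ring_nf

theorem det_sineMatrix_eq_prod_sin_mul_det_vandermonde (n : ℕ) :
    (sineMatrix n).det = (∏ k : Fin (n - 1), Real.sin ((k + 1 : ℕ) * π / n)) *
      ((vandermonde fun k : Fin (n - 1) => Real.cos ((k + 1 : ℕ) * π / n)).det *
        ∏ ℓ : Fin (n - 1), 2 ^ (ℓ : ℕ)) := by
  rw [sineMatrix_eq_sin_mul_eval_U, ← det_eval_chebyshevU]
  exact det_mul_column _ _

theorem neg_one_pow_mul_det_sineMatrix_pos (n : ℕ) :
    0 < (-1) ^ (n - 1).choose 2 * (sineMatrix n).det := by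
  have hangle (k : Fin (n - 1)) : ((k + 1 : ℕ) * π / n) ∈ Set.Ioo 0 π :=
    Real.natCast_mul_pi_div_mem_Ioo k.succ_pos (by omega)
  have hsin : 0 < ∏ k : Fin (n - 1), Real.sin ((k + 1 : ℕ) * π / n) :=
    prod_pos fun k _ => Real.sin_pos_of_pos_of_lt_pi (hangle k).1 (hangle k).2
  have hcos : StrictAnti fun k : Fin (n - 1) => Real.cos ((k + 1 : ℕ) * π / n) := by
    intro i j hij
    refine Real.strictAntiOn_cos (Set.Ioo_subset_Icc_self (hangle i))
      (Set.Ioo_subset_Icc_self (hangle j)) ?_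
    have hn : (0 : ℝ) < n := by exact_mod_cast (show 0 < n by omega)
    gcongr
    exact hij
  rw [det_sineMatrix_eq_prod_sin_mul_det_vandermonde,
    show ∀ s p v q : ℝ, s * (p * (v * q)) = p * (s * v) * q from fun _ _ _ _ => by ring]
  exact mul_pos (mul_pos hsin (neg_one_pow_mul_det_vandermonde_pos hcos)) (by positivity)

theorem det_sineMatrix (n : ℕ) :
    (sineMatrix n).det = (-1) ^ (n - 1).choose 2 * √((n : ℝ) / 2) ^ (n - 1) := by
  have hsign : ((-1 : ℝ) ^ (n - 1).choose 2) ^ 2 = 1 := by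
    rw [← pow_mul, mul_comm, pow_mul, neg_one_sq, one_pow]
  have habs : (-1) ^ (n - 1).choose 2 * (sineMatrix n).det = √((n : ℝ) / 2) ^ (n - 1) := by
    refine (pow_left_inj₀ (neg_one_pow_mul_det_sineMatrix_pos n).le (by positivity)
      two_ne_zero).mp ?_
    rw [mul_pow, hsign, one_mul, det_sineMatrix_sq, ← pow_mul, mul_comm, pow_mul,
      Real.sq_sqrt (by positivity)]
  rw [← habs, ← mul_assoc, ← sq, hsign, one_mul]

theorem det_two_div_sqrt_smul_sineMatrix (n : ℕ) :
    ((2 / √(2 * n : ℝ)) • sineMatrix n).det = (-1) ^ (n - 1).choose 2 := by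
  rcases eq_or_ne n 0 with rfl | hn
  · simp
  have hpos : 0 < √((n : ℝ) / 2) := Real.sqrt_pos.mpr (by positivity)
  have hsqrt : √(2 * n : ℝ) = 2 * √((n : ℝ) / 2) := by
    rw [show (2 * n : ℝ) = 2 ^ 2 * (n / 2) by ring, Real.sqrt_mul' _ (by positivity),
      Real.sqrt_sq zero_le_two]
  rw [det_smul, Fintype.card_fin, det_sineMatrix, hsqrt, mul_left_comm, ← mul_pow,
    show 2 / (2 * √((n : ℝ) / 2)) * √((n : ℝ) / 2) = 1 by field_simp, one_pow, mul_one]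

theorem Nat.three_mul_add_four_mul_choose_two (m : ℕ) :
    3 * m + 4 * m.choose 2 = (2 * m + 1) * m := by
  have h := Nat.choose_two_right m
  have h2 := Nat.div_two_mul_two_of_even (Nat.even_mul_pred_self m)
  cases m with
  | zero => rfl
  | succ m =>
    simp only [Nat.add_sub_cancel] at h h2
    nlinarith

namespace Complex

theorem neg_I_cpow_natCast_div_two (k : ℕ) :
    (-I) ^ ((k : ℂ) / 2) = exp (-(π / 4) * I) ^ k := by
  rw [cpow_def_of_ne_zero (neg_ne_zero.mpr I_ne_zero), log_neg_I, ← exp_nat_mul]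
  ring_nf

theorem exp_neg_pi_div_four_mul_I_pow_four : exp (-(π / 4) * I) ^ 4 = -1 := by
  rw [← neg_I_cpow_natCast_div_two]
  norm_num

end Complex

theorem sine_matrix_det (N : ℕ) (hN : Even N) (h4 : 4 ≤ N) :
    Matrix.det (Matrix.of fun k ℓ : Fin (N / 2 - 1) =>
        (2 * (-I) ^ ((3 : ℂ) / 2) / (Real.sqrt N : ℂ)) *
          (Real.sin (2 * Real.pi * ((ℓ : ℕ) + 1) * ((k : ℕ) + 1) / N) : ℂ)) =
      (-I) ^ ((((N : ℂ) - 1) * ((N : ℂ) - 2)) / 4) := by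
  obtain ⟨n, rfl⟩ := hN.two_dvd
  have hn : n ≠ 0 := by omega
  rw [Nat.mul_div_cancel_left n two_pos]
  have hmatrix : (of fun k ℓ : Fin (n - 1) =>
      (2 * (-I) ^ ((3 : ℂ) / 2) / (√(2 * n : ℕ) : ℂ)) *
        (Real.sin (2 * π * ((ℓ : ℕ) + 1) * ((k : ℕ) + 1) / (2 * n : ℕ)) : ℂ)) =
      (-I) ^ ((3 : ℂ) / 2) • ofRealHom.mapMatrix ((2 / √(2 * n : ℝ)) • sineMatrix n) := by
    ext k ℓ
    simp only [sineMatrix, of_apply, Matrix.smul_apply, RingHom.mapMatrix_apply, map_apply,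
      ofRealHom_eq_coe, smul_eq_mul]
    push_cast
    field_simp
  have hexp : ((((2 * n : ℕ) : ℂ) - 1) * (((2 * n : ℕ) : ℂ) - 2)) / 4 =
      (((2 * (n - 1) + 1) * (n - 1) : ℕ) : ℂ) / 2 := by
    push_cast [Nat.cast_sub (Nat.one_le_iff_ne_zero.mpr hn)]
    ring
  rw [hmatrix, det_smul, ← RingHom.map_det, det_two_div_sqrt_smul_sineMatrix, hexp,
    Fintype.card_fin, neg_I_cpow_natCast_div_two, ← Nat.three_mul_add_four_mul_choose_two,
    pow_add, pow_mul, pow_mul,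
    exp_neg_pi_div_four_mul_I_pow_four, ← neg_I_cpow_natCast_div_two 3, ofRealHom_eq_coe]
  norm_cast
end

section
/- Let N be a positive even integer and r ∈ ℤ. Then θ̃_{3/2}(N, r; −1/τ) = (2/√N)(−iτ)^{3/2} ∑_{k=1}^{N/2−1} sin(2πkr/N) θ̃_{3/2}(N, k; τ), where θ̃_{3/2}(N,r;τ) := ∑_{n∈ℤ} (n + r/N) e^{πiNτ(n + r/N)²}. -/
/-!
`θ̃(N, r; τ)` is Mathlib's odd theta kernel `jacobiTheta₂'' (r / N) (N τ)`, so its inversion law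
comes from the functional equation of `jacobiTheta₂'`, which relates `θ̃(N, r; -1/τ)` to
`jacobiTheta₂' (r / N) (τ / N)`. Splitting the series of the latter along the residue classes
`n ≡ k (mod N)` gives `2πiN ∑_{k < N} e^{2πikr/N} θ̃(N, k; τ)`. As `θ̃` is odd and `N`-periodic in
`r`, pairing `k` with `N - k` leaves only the sine terms with `0 < k < N / 2`.
-/

open Complex

/-- The shifted weight 3/2 theta function
`θ̃_{3/2}(N,r;τ) = ∑_{n∈ℤ} (n + r/N) q^{(N/2)(n + r/N)²}` (for `N` even). -/
noncomputable def thetaTilde (N : ℕ) (r : ℤ) (τ : ℂ) : ℂ :=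
  ∑' n : ℤ, ((n : ℂ) + (r : ℂ) / (N : ℂ)) *
    Complex.exp ((Real.pi : ℂ) * I * N * τ * ((n : ℂ) + (r : ℂ) / (N : ℂ)) ^ 2)

open Real HurwitzZeta

lemma HasSum.sum_fin_residues_eq {α : Type*} [AddCommMonoid α] [TopologicalSpace α]
    [ContinuousAdd α] [T3Space α] {f : ℤ → α} {a : α} {N : ℕ} [NeZero N]
    {g : Fin N → α} (hf : HasSum f a)
    (hg : ∀ k : Fin N, HasSum (fun q : ℤ ↦ f (q * N + (k : ℕ))) (g k)) :
    ∑ k, g k = a := by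
  have h := ((Equiv.prodComm _ _).trans (Int.divModEquiv N).symm).hasSum_iff.mpr hf
  exact (hasSum_fintype g).unique (h.prod_fiberwise hg)

lemma hasSum_jacobiTheta₂'' (a : ℂ) {τ : ℂ} (hτ : 0 < τ.im) :
    HasSum (fun n : ℤ ↦ (n + a) * cexp (π * I * τ * (n + a) ^ 2)) (jacobiTheta₂'' a τ) := by
  have hθ := hasSum_jacobiTheta₂_term (a * τ) hτ
  have hθ' := hasSum_jacobiTheta₂'_term (a * τ) hτ
  refine (((hθ'.div_const (2 * π * I)).add (hθ.mul_left a)).mul_left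
    (cexp (π * I * a ^ 2 * τ))).congr_fun fun n ↦ ?_
  rw [jacobiTheta₂'_term, mul_assoc (2 * π * I), mul_div_cancel_left₀ _ two_pi_I_ne_zero,
    ← add_mul, jacobiTheta₂_term, mul_left_comm (cexp _), ← Complex.exp_add]
  congr 2
  ring

lemma jacobiTheta₂''_neg_one_div (z : ℂ) {τ : ℂ} (hτ : τ ≠ 0) :
    jacobiTheta₂'' z (-1 / τ) = (-I * τ) ^ (3 / 2 : ℂ) / (-2 * π) * jacobiTheta₂' z τ := by
  have h : (-I * τ) ^ (3 / 2 : ℂ) ≠ 0 :=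
    cpow_ne_zero_iff.mpr (.inl (mul_ne_zero (neg_ne_zero.mpr I_ne_zero) hτ))
  rw [jacobiTheta₂'_functional_equation']
  field_simp

lemma div_ofReal_cpow {x : ℝ} (hx : 0 < x) (z w : ℂ) : (z / x) ^ w = z ^ w / (x : ℂ) ^ w := by
  rcases eq_or_ne z 0 with rfl | hz
  · rcases eq_or_ne w 0 with rfl | hw
    · simp
    · simp [zero_cpow hw]
  rw [cpow_def_of_ne_zero (div_ne_zero hz (ofReal_ne_zero.mpr hx.ne')), cpow_def_of_ne_zero hz,
    cpow_def_of_ne_zero (ofReal_ne_zero.mpr hx.ne'), ← Complex.exp_sub, div_eq_mul_inv,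
    ← ofReal_inv, log_mul_ofReal _ (inv_pos.mpr hx) _ hz, Real.log_inv, ofReal_neg,
    ofReal_log hx.le]
  ring_nf

lemma ofReal_cpow_three_halves {x : ℝ} (hx : 0 ≤ x) :
    (x : ℂ) ^ (3 / 2 : ℂ) = x * Real.sqrt x := by
  rw [Real.sqrt_eq_rpow, ofReal_cpow hx, show (3 / 2 : ℂ) = 1 + (1 / 2 : ℝ) by norm_num]
  rcases hx.eq_or_lt with rfl | hx
  · norm_num
  rw [cpow_add _ _ (ofReal_ne_zero.mpr hx.ne'), cpow_one]

lemma hasSum_thetaTilde {N : ℕ} (hN : 0 < N) (r : ℤ) {τ : ℂ} (hτ : 0 < τ.im) :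
    HasSum (fun n : ℤ ↦ ((n : ℂ) + r / N) * cexp (π * I * N * τ * (n + r / N) ^ 2))
      (jacobiTheta₂'' (r / N) (N * τ)) :=
  (hasSum_jacobiTheta₂'' _ (by simpa using mul_pos (Nat.cast_pos.mpr hN) hτ)).congr_fun
    fun n ↦ by ring_nf

lemma thetaTilde_eq_jacobiTheta₂'' {N : ℕ} (hN : 0 < N) (r : ℤ) {τ : ℂ} (hτ : 0 < τ.im) :
    thetaTilde N r τ = jacobiTheta₂'' (r / N) (N * τ) :=
  (hasSum_thetaTilde hN r hτ).tsum_eq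

lemma thetaTilde_odd (N : ℕ) (τ : ℂ) : Function.Odd (thetaTilde N · τ) := by
  intro r
  dsimp only
  rw [thetaTilde, thetaTilde, ← tsum_neg, ← (Equiv.neg ℤ).tsum_eq]
  refine tsum_congr fun n ↦ ?_
  simp only [Equiv.neg_apply, Int.cast_neg]
  ring_nf

lemma thetaTilde_periodic (N : ℕ) (τ : ℂ) : Function.Periodic (thetaTilde N · τ) N := by
  intro r
  dsimp only
  rcases eq_or_ne N 0 with rfl | hN
  · simp
  rw [thetaTilde, thetaTilde, ← (Equiv.subRight (1 : ℤ)).tsum_eq]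
  refine tsum_congr fun n ↦ ?_
  have h : ((n - 1 : ℤ) : ℂ) + ((r + N : ℤ) : ℂ) / N = n + r / N := by
    push_cast
    field_simp
    ring
  simp only [Equiv.subRight_apply, h]

lemma jacobiTheta₂'_div_natCast_eq_sum_thetaTilde {N : ℕ} (hN : 0 < N) (r : ℤ) {τ : ℂ}
    (hτ : 0 < τ.im) :
    jacobiTheta₂' (r / N) (τ / N) =
      2 * π * I * N * ∑ k ∈ Finset.range N, cexp (2 * π * I * k * r / N) * thetaTilde N k τ := by
  have : NeZero N := ⟨hN.ne'⟩
  have hN' : (N : ℂ) ≠ 0 := Nat.cast_ne_zero.mpr hN.ne'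
  have him : 0 < (τ / N).im := by simpa using div_pos hτ (Nat.cast_pos.mpr hN)
  have hterm : ∀ (q : ℤ) (k : ℕ), jacobiTheta₂'_term (q * N + k) (r / N) (τ / N) =
      2 * π * I * N * cexp (2 * π * I * k * r / N) *
        ((q + k / N) * cexp (π * I * N * τ * (q + k / N) ^ 2)) := by
    intro q k
    have hexp : 2 * π * I * ((q * N + k : ℤ) : ℂ) * (r / N) +
          π * I * ((q * N + k : ℤ) : ℂ) ^ 2 * (τ / N) =
        (q * r : ℤ) * (2 * π * I) + (2 * π * I * k * r / N + π * I * N * τ * (q + k / N) ^ 2) := by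
      push_cast
      field_simp
      ring
    rw [jacobiTheta₂'_term, jacobiTheta₂_term, hexp, Complex.exp_add, Complex.exp_add,
      exp_int_mul_two_pi_mul_I, one_mul]
    push_cast
    field_simp
  rw [← (hasSum_jacobiTheta₂'_term _ him).sum_fin_residues_eq (N := N) (g := fun k ↦
    2 * π * I * N * cexp (2 * π * I * (k : ℕ) * r / N) * thetaTilde N (k : ℕ) τ), Finset.mul_sum,
    ← Fin.sum_univ_eq_sum_range]
  · simp only [mul_assoc]
  intro k
  rw [thetaTilde_eq_jacobiTheta₂'' hN _ hτ]
  exact ((hasSum_thetaTilde hN k hτ).mul_left _).congr_fun fun q ↦ by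
    rw [hterm]; push_cast; ring

lemma Finset.sum_range_two_mul_eq_sum_Ico_add_reflect {β : Type*} [AddCommMonoid β] {M : ℕ}
    {g : ℕ → β} (hg0 : g 0 = 0) (hgM : g M = 0) :
    ∑ k ∈ range (2 * M), g k = ∑ k ∈ Ico 1 M, (g k + g (2 * M - k)) := by
  rcases M.eq_zero_or_pos with rfl | hM
  · simp
  rw [range_eq_Ico, ← sum_Ico_consecutive g (Nat.zero_le M) (by omega : M ≤ 2 * M),
    sum_eq_sum_Ico_succ_bot hM, hg0, zero_add, sum_eq_sum_Ico_succ_bot (by omega : M < 2 * M),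
    hgM, zero_add, zero_add, sum_add_distrib]
  congr 1
  refine (sum_nbij' (fun k ↦ 2 * M - k) (fun k ↦ 2 * M - k) ?_ ?_ ?_ ?_ fun _ _ ↦ rfl).symm <;>
  · intro k hk
    simp only [mem_Ico] at hk ⊢
    omega

lemma sum_range_exp_mul_eq_sum_sin_mul {N : ℕ} (hN : Even N) {f : ℤ → ℂ} (hodd : Function.Odd f)
    (hper : Function.Periodic f N) (r : ℤ) :
    ∑ k ∈ Finset.range N, cexp (2 * π * I * k * r / N) * f k =
      2 * I * ∑ k ∈ Finset.Icc 1 (N / 2 - 1), (Real.sin (2 * π * k * r / N) : ℂ) * f k := by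
  obtain ⟨M, rfl⟩ := hN
  rw [← two_mul, Nat.mul_div_cancel_left M two_pos]
  have hreflect (k : ℤ) : f (2 * M - k) = -f k := by
    rw [← hodd, ← hper (-k)]
    push_cast
    ring_nf
  have hf0 : f 0 = 0 := self_eq_neg.mp (by simpa using hodd 0)
  have hfM : f M = 0 := self_eq_neg.mp (by simpa [two_mul] using hreflect M)
  have hIcc : Finset.Icc 1 (M - 1) = Finset.Ico 1 M := by ext; simp; omega
  rw [Finset.sum_range_two_mul_eq_sum_Ico_add_reflect (by simp [hf0]) (by simp [hfM]), hIcc,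
    Finset.mul_sum]
  refine Finset.sum_congr rfl fun k hk ↦ ?_
  simp only [Finset.mem_Ico] at hk
  have hM : (M : ℂ) ≠ 0 := Nat.cast_ne_zero.mpr (by omega)
  push_cast [Nat.cast_sub (by omega : k ≤ 2 * M), hreflect]
  set x : ℂ := 2 * π * k * r / (2 * M)
  have hexp : 2 * π * I * k * r / (2 * M) = x * I := by ring
  have hexp' : 2 * π * I * (2 * M - k) * r / (2 * M) = r * (2 * π * I) + -x * I := by
    simp only [x]
    field_simp
    ring
  rw [hexp, hexp', Complex.exp_add, exp_int_mul_two_pi_mul_I, one_mul]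
  linear_combination (-(I * f k)) * two_sin x + (cexp (x * I) - cexp (-x * I)) * f k * I_sq

theorem thetaTilde_inversion (N : ℕ) (hN : Even N) (h0 : 0 < N) (r : ℤ) (τ : ℂ)
    (hτ : 0 < τ.im) :
    thetaTilde N r (-1 / τ) =
      2 / (Real.sqrt N : ℂ) * (-I * τ) ^ ((3 : ℂ) / 2) *
        ∑ k ∈ Finset.Icc 1 (N / 2 - 1),
          (Real.sin (2 * Real.pi * k * r / N) : ℂ) * thetaTilde N (k : ℤ) τ := by
  have hτ0 : τ ≠ 0 := by rintro rfl; simp at hτ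
  have hN0 : (N : ℂ) ≠ 0 := Nat.cast_ne_zero.mpr h0.ne'
  have hsqrt : (Real.sqrt N : ℂ) ≠ 0 :=
    ofReal_ne_zero.mpr (Real.sqrt_pos.mpr (Nat.cast_pos.mpr h0)).ne'
  have him : 0 < (-1 / τ).im := by
    rw [neg_div, one_div, neg_im, inv_im, neg_div, neg_neg]
    exact div_pos hτ (normSq_pos.mpr hτ0)
  set S := ∑ k ∈ Finset.Icc 1 (N / 2 - 1),
    (Real.sin (2 * Real.pi * k * r / N) : ℂ) * thetaTilde N (k : ℤ) τ
  calc thetaTilde N r (-1 / τ) = jacobiTheta₂'' (r / N) (-1 / (τ / N)) := by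
        rw [thetaTilde_eq_jacobiTheta₂'' h0 r him]
        congr 1
        field_simp
    _ = (-I * (τ / N)) ^ (3 / 2 : ℂ) / (-2 * π) * (2 * π * I * N * (2 * I * S)) := by
        rw [jacobiTheta₂''_neg_one_div _ (div_ne_zero hτ0 hN0),
          jacobiTheta₂'_div_natCast_eq_sum_thetaTilde h0 r hτ,
          sum_range_exp_mul_eq_sum_sin_mul hN (thetaTilde_odd N τ) (thetaTilde_periodic N τ)]
    _ = 2 / (Real.sqrt N : ℂ) * (-I * τ) ^ ((3 : ℂ) / 2) * S := by
        rw [show -I * (τ / N) = (-I * τ) / (N : ℝ) by push_cast; ring,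
          div_ofReal_cpow (Nat.cast_pos.mpr h0), ofReal_cpow_three_halves (Nat.cast_nonneg N)]
        push_cast
        field_simp
        linear_combination -S * I_sq
end

section
/- Let χ: ℤ → ℂ be periodic with mean value zero. Then as t → 0⁺, ∑_{n≥1} n χ(n) e^{−n²t} has the asymptotic expansion ∑_{n≥0} (−1)^n L(−2n−1, χ) t^n/n!, i.e., for every M, ∑_{n≥1} n χ(n) e^{−n²t} − ∑_{n=0}^{M} (−1)^n L(−2n−1,χ) t^n/n! = O(t^{M+1}). -/
/-!
Put `c n = χ (n + 1)`. As `c` is periodic with mean zero, its partial sums are bounded and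
periodic, so summation by parts `∑ c h = m h(0) + ∑ c' Δh` (with `c'` the mean `m` of the partial
sums minus the partial sums) can be iterated: for every absolutely summable `h`,
`∑ c h = ∑_{j<K} m_j Δʲh(0) + ∑ c_K Δᴷh` with `c_K` bounded.

For `h(n) = (n + 1)^{-s}` the remainder is `∑ O(n^{-Re s - K})`, holomorphic on `Re s > 1 - K`,
so the right side continues `L`; at `s = -q` with `q + 2 ≤ K` the remainder vanishes because `Δᴷ`
kills polynomials of degree `< K`, whence `L(-q) = ∑_{j<K} m_j Δʲ[(n + 1)^q](0)`.

For `h(n) = (n + 1) e^{-(n+1)² t} = G((n + 1)√t) / √t` with `G(u) = u e^{-u²}`, the mean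
value theorem bounds `Δᴷh(n)` by a multiple of `√t^{K-1} e^{-(n+1)√t}`, so the remainder is
`O(√t^{K-2})`. Expanding the finitely many values `h(0), …, h(K - 1)` by Taylor's formula for
`exp` turns the main terms `∑_{j<K} m_j Δʲh(0)` into `∑_{i ≤ M} (-t)^i / i! · L(-2i-1)` up to
`O(t^{M+1})`.
-/

open Complex Asymptotics Filter Finset Topology fwdDiff
open scoped Polynomial Nat

section IteratedDifferences

theorem fwdDiff_iter_natCast_apply {R G : Type*} [AddCommMonoidWithOne R] [AddCommGroup G]
    (f : R → G) (K n : ℕ) :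
    (Δ_[1])^[K] (fun m : ℕ => f m) n = (Δ_[1])^[K] f n := by
  simp [fwdDiff_iter_eq_sum_shift]

theorem fwdDiff_iter_sum_mul_apply {ι R M : Type*} [AddCommMonoid M] [Ring R] (h : M)
    (s : Finset ι) (b : ι → R) (P : ι → M → R) (j : ℕ) (x : M) :
    (Δ_[h])^[j] (fun m => ∑ i ∈ s, b i * P i m) x = ∑ i ∈ s, b i * (Δ_[h])^[j] (P i) x := by
  simp only [fwdDiff_iter_eq_sum_shift, mul_sum, smul_sum, mul_smul_comm]
  exact sum_comm

theorem isBigO_fwdDiff_iter_sub {α E : Type*} [NormedAddCommGroup E] {l : Filter α}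
    {f g : α → ℕ → E} {u : α → ℝ} (h : ∀ k, (fun a => f a k - g a k) =O[l] u) (j n : ℕ) :
    (fun a => (Δ_[1])^[j] (f a) n - (Δ_[1])^[j] (g a) n) =O[l] u := by
  simp only [fwdDiff_iter_eq_sum_shift, ← sum_sub_distrib, ← smul_sub]
  exact IsBigO.fun_sum fun k _ =>
    (IsBigO.of_bound _ (Eventually.of_forall fun a => norm_zsmul_le _ _)).trans (h _)

theorem norm_fwdDiff_iter_le_of_hasDerivAt {E : Type*} [NormedAddCommGroup E] [NormedSpace ℝ E]
    {a : ℝ} {β : ℝ → ℝ} (hβ : AntitoneOn β (Set.Ici a)) (K : ℕ) (ψ : ℕ → ℝ → E)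
    (hψ : ∀ k < K, ∀ x, a ≤ x → HasDerivAt (ψ k) (ψ (k + 1) x) x)
    (hψK : ∀ x, a ≤ x → ‖ψ K x‖ ≤ β x) {x : ℝ} (hx : a ≤ x) :
    ‖(Δ_[1])^[K] (ψ 0) x‖ ≤ β x := by
  induction K generalizing ψ x with
  | zero => exact hψK x hx
  | succ K ih =>
    rw [Function.iterate_succ_apply]
    refine ih (fun k => Δ_[1] (ψ k)) (fun k hk y hy => ?_) (fun y hy => ?_) hx
    · exact ((hψ k (by omega) (y + 1) (by linarith)).comp_add_const y 1).sub
        (hψ k (by omega) y hy)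
    · have hderiv : ∀ z ∈ Set.Icc y (y + 1),
          HasDerivWithinAt (ψ K) (ψ (K + 1) z) (Set.Icc y (y + 1)) z := fun z hz =>
        (hψ K (by omega) z (hy.trans hz.1)).hasDerivWithinAt
      have hbound : ∀ z ∈ Set.Ico y (y + 1), ‖ψ (K + 1) z‖ ≤ β y := fun z hz =>
        (hψK z (hy.trans hz.1)).trans (hβ hy (hy.trans hz.1) hz.1)
      simpa [fwdDiff] using norm_image_sub_le_of_norm_deriv_le_segment' hderiv hbound (y + 1)
        (by simp)

theorem fwdDiff_iter_natCast_add_one_pow_eq_zero {q K : ℕ} (hqK : q < K) (n : ℕ) :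
    (Δ_[1])^[K] (fun m : ℕ => ((m : ℂ) + 1) ^ q) n = 0 := by
  rw [fwdDiff_iter_natCast_apply (fun r : ℂ => (r + 1) ^ q),
    fwdDiff_iter_comp_add _ (fun r : ℂ => r ^ q), fwdDiff_iter_pow_eq_zero_of_lt hqK, Pi.zero_apply]

end IteratedDifferences

section SummationByParts

theorem Function.Periodic.exists_norm_le {E : Type*} [SeminormedAddGroup E] {d : ℕ → E} {N : ℕ}
    (hd : Function.Periodic d N) (hN : 0 < N) : ∃ C, ∀ n, ‖d n‖ ≤ C :=
  ⟨∑ k ∈ range N, ‖d k‖, fun n => hd.map_mod_nat n ▸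
    single_le_sum (fun k _ => norm_nonneg (d k)) (mem_range.mpr (Nat.mod_lt n hN))⟩

theorem summable_mul_of_norm_le {e h : ℕ → ℂ} {C : ℝ} (he : ∀ n, ‖e n‖ ≤ C)
    (hh : Summable (‖h ·‖)) : Summable fun n => e n * h n :=
  Summable.of_norm_bounded (hh.mul_left C) fun n => by
    rw [norm_mul]; exact mul_le_mul_of_nonneg_right (he n) (norm_nonneg _)

theorem summable_norm_fwdDiff_iter {h : ℕ → ℂ} (hh : Summable (‖h ·‖)) (j : ℕ) :
    Summable (‖(Δ_[1])^[j] h ·‖) := by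
  induction j with
  | zero => exact hh
  | succ j ih =>
    rw [Function.iterate_succ_apply']
    exact Summable.of_nonneg_of_le (fun _ => norm_nonneg _) (fun n => norm_sub_le _ _)
      ((summable_nat_add_iff 1).mpr ih |>.add ih)

theorem tsum_fwdDiff_mul {T h : ℕ → ℂ} {C : ℝ} (hT : ∀ n, ‖T n‖ ≤ C)
    (hh : Summable (‖h ·‖)) :
    ∑' n, Δ_[1] T n * h n = -(T 0 * h 0) - ∑' n, T (n + 1) * Δ_[1] h n := by
  have hpartial : ∀ N, ∑ n ∈ range N, Δ_[1] T n * h n =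
      T N * h N - T 0 * h 0 - ∑ n ∈ range N, T (n + 1) * Δ_[1] h n := by
    intro N
    induction N with
    | zero => simp
    | succ N ih => rw [sum_range_succ, sum_range_succ, ih]; simp only [fwdDiff]; ring
  have hΔT : ∀ n, ‖Δ_[1] T n‖ ≤ C + C := fun n => (norm_sub_le _ _).trans (add_le_add (hT _) (hT _))
  have hboundary : Tendsto (fun N => T N * h N) atTop (𝓝 0) :=
    squeeze_zero_norm (fun N => (norm_mul_le _ _).trans (mul_le_mul_of_nonneg_right (hT N)
      (norm_nonneg _))) (by simpa using (hh.tendsto_atTop_zero).const_mul C)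
  refine tendsto_nhds_unique (summable_mul_of_norm_le hΔT hh).hasSum.tendsto_sum_nat ?_
  simp_rw [hpartial]
  simpa using (hboundary.sub_const (T 0 * h 0)).sub
    (summable_mul_of_norm_le (fun n => hT (n + 1))
      (summable_norm_fwdDiff_iter hh 1)).hasSum.tendsto_sum_nat

theorem tsum_fwdDiff {h : ℕ → ℂ} (hh : Summable (‖h ·‖)) : ∑' n, Δ_[1] h n = -h 0 := by
  have := tsum_fwdDiff_mul (T := fun _ => (1 : ℂ)) (C := 1) (by simp) hh
  simp only [fwdDiff, sub_self, zero_mul, tsum_zero, one_mul] at this ⊢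
  linear_combination this

end SummationByParts

structure MeanZeroPeriodic (N : ℕ) (d : ℕ → ℂ) : Prop where
  periodic : Function.Periodic d N
  sum_range_eq_zero : ∑ k ∈ range N, d k = 0

noncomputable def abelMean (N : ℕ) (d : ℕ → ℂ) : ℂ :=
  (∑ n ∈ range N, ∑ k ∈ range (n + 1), d k) / N

noncomputable def abelTransform (N : ℕ) (d : ℕ → ℂ) (n : ℕ) : ℂ :=
  abelMean N d - ∑ k ∈ range (n + 1), d k

namespace MeanZeroPeriodic

variable {N : ℕ} {d : ℕ → ℂ}

theorem sum_range_add_eq_zero (hd : MeanZeroPeriodic N d) (a : ℕ) :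
    ∑ k ∈ range N, d (a + k) = 0 := by
  induction a with
  | zero => simpa using hd.sum_range_eq_zero
  | succ a ih =>
    have hshift := (sum_range_succ' (fun k => d (a + k)) N).symm.trans
      (sum_range_succ (fun k => d (a + k)) N)
    rw [add_zero, hd.periodic a, ih, zero_add, add_eq_right] at hshift
    rw [← hshift]
    exact sum_congr rfl fun k _ => congrArg d (by omega)

theorem periodic_sum_range (hd : MeanZeroPeriodic N d) :
    Function.Periodic (fun n => ∑ k ∈ range n, d k) N := fun n => by
  simp only [sum_range_add, hd.sum_range_add_eq_zero, add_zero]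

theorem _root_.meanZeroPeriodic_abelTransform (hd : MeanZeroPeriodic N d) (hN : 0 < N) :
    MeanZeroPeriodic N (abelTransform N d) where
  periodic n := by
    simp only [abelTransform, hd.periodic_sum_range.add_const 1 n]
  sum_range_eq_zero := by
    simp only [abelTransform, abelMean, sum_sub_distrib, sum_const, card_range, nsmul_eq_mul]
    have : (N : ℂ) ≠ 0 := Nat.cast_ne_zero.mpr hN.ne'
    field_simp
    ring

theorem _root_.meanZeroPeriodic_iterate_abelTransform (hd : MeanZeroPeriodic N d) (hN : 0 < N)
    (j : ℕ) :
    MeanZeroPeriodic N ((abelTransform N)^[j] d) := by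
  induction j with
  | zero => exact hd
  | succ j ih => rw [Function.iterate_succ_apply']; exact meanZeroPeriodic_abelTransform ih hN

theorem tsum_mul_eq (hd : MeanZeroPeriodic N d) (hN : 0 < N) {h : ℕ → ℂ}
    (hh : Summable (‖h ·‖)) :
    ∑' n, d n * h n = abelMean N d * h 0 + ∑' n, abelTransform N d n * Δ_[1] h n := by
  obtain ⟨C, hC⟩ := hd.periodic_sum_range.exists_norm_le hN
  have hΔh : Summable (‖Δ_[1] h ·‖) := summable_norm_fwdDiff_iter hh 1
  have hΔ : Δ_[1] (fun n => ∑ k ∈ range n, d k) = d :=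
    funext fun n => sum_range_succ_sub_sum d
  have hbyparts := tsum_fwdDiff_mul hC hh
  rw [hΔ, sum_range_zero, zero_mul, neg_zero, zero_sub] at hbyparts
  simp only [abelTransform, sub_mul]
  rw [hbyparts, (hΔh.of_norm.mul_left _).tsum_sub
    (summable_mul_of_norm_le (fun n => hC (n + 1)) hΔh), tsum_mul_left, tsum_fwdDiff hh]
  ring

theorem tsum_mul_eq_sum_add_tsum (hd : MeanZeroPeriodic N d) (hN : 0 < N) {h : ℕ → ℂ}
    (hh : Summable (‖h ·‖)) (K : ℕ) :
    ∑' n, d n * h n =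
      ∑ j ∈ range K, abelMean N ((abelTransform N)^[j] d) * (Δ_[1])^[j] h 0 +
        ∑' n, (abelTransform N)^[K] d n * (Δ_[1])^[K] h n := by
  induction K with
  | zero => simp
  | succ K ih =>
    rw [ih, (meanZeroPeriodic_iterate_abelTransform hd hN K).tsum_mul_eq hN
      (summable_norm_fwdDiff_iter hh K), sum_range_succ, Function.iterate_succ_apply',
      Function.iterate_succ_apply']
    ring

end MeanZeroPeriodic

section DirichletSeries

theorem hasDerivAt_ofReal_add_one_cpow (c : ℂ) {x : ℝ} (hx : 0 ≤ x) :
    HasDerivAt (fun y : ℝ => ((y : ℂ) + 1) ^ c) (c * ((x : ℂ) + 1) ^ (c - 1)) x := by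
  have hslit : (x : ℂ) + 1 ∈ slitPlane := by
    exact_mod_cast ofReal_mem_slitPlane.mpr (by linarith : (0 : ℝ) < x + 1)
  simpa using (((hasDerivAt_id (x : ℂ)).add_const 1).cpow_const hslit).comp_ofReal

theorem norm_ofReal_add_one_cpow {y : ℝ} (hy : 0 ≤ y) (c : ℂ) :
    ‖((y : ℂ) + 1) ^ c‖ = (y + 1) ^ c.re := by
  exact_mod_cast norm_cpow_eq_rpow_re_of_pos (by linarith : (0 : ℝ) < y + 1) c

theorem norm_fwdDiff_iter_cpow_le {s : ℂ} {K : ℕ} (hsK : 0 ≤ s.re + K) (n : ℕ) :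
    ‖(Δ_[1])^[K] (fun m : ℕ => ((m : ℂ) + 1) ^ (-s)) n‖ ≤
      (∏ i ∈ range K, ‖s + i‖) * ((n : ℝ) + 1) ^ (-(s.re + K)) := by
  set ψ : ℕ → ℝ → ℂ := fun k y => (∏ i ∈ range k, -(s + i)) * ((y : ℂ) + 1) ^ (-(s + k))
  have hψ0 : (fun m : ℕ => ((m : ℂ) + 1) ^ (-s)) = fun m : ℕ => ψ 0 m := by simp [ψ]
  rw [hψ0, fwdDiff_iter_natCast_apply]
  refine norm_fwdDiff_iter_le_of_hasDerivAt (a := 0)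
    (β := fun y => (∏ i ∈ range K, ‖s + i‖) * (y + 1) ^ (-(s.re + K))) (fun x hx y hy hxy => ?_) K ψ
    (fun k _ x hx => ?_) (fun y hy => ?_) (Nat.cast_nonneg n)
  · exact mul_le_mul_of_nonneg_left (Real.rpow_le_rpow_of_nonpos
      (by linarith [hx.out] : (0 : ℝ) < x + 1) (by linarith) (by linarith)) (by positivity)
  · refine ((hasDerivAt_ofReal_add_one_cpow (-(s + k)) hx).const_mul
      (∏ i ∈ range k, -(s + i))).congr_deriv ?_
    rw [show -(s + k) - 1 = -(s + (k + 1 : ℕ)) by push_cast; ring]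
    simp only [ψ, prod_range_succ]
    ring
  · simp only [ψ, norm_mul, norm_prod, norm_neg]
    rw [norm_ofReal_add_one_cpow hy]
    simp

theorem summable_nat_add_one_rpow {p : ℝ} (hp : p < -1) :
    Summable fun n : ℕ => ((n : ℝ) + 1) ^ p := by
  simpa using (summable_nat_add_iff 1).mpr (Real.summable_nat_rpow.mpr hp)

theorem summable_norm_natCast_add_one_cpow_neg {s : ℂ} (hs : 1 < s.re) :
    Summable fun n : ℕ => ‖((n : ℂ) + 1) ^ (-s)‖ := by
  refine (summable_nat_add_one_rpow (p := -s.re) (by linarith)).congr fun n => ?_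
  simpa using (norm_ofReal_add_one_cpow (Nat.cast_nonneg n) (-s)).symm

theorem differentiable_fwdDiff_iter_cpow (j n : ℕ) :
    Differentiable ℂ fun s : ℂ => (Δ_[1])^[j] (fun m : ℕ => ((m : ℂ) + 1) ^ (-s)) n := by
  simp only [fwdDiff_iter_eq_sum_shift]
  exact Differentiable.fun_sum fun k _ => (differentiable_id.neg.const_cpow
    (Or.inl (Nat.cast_add_one_ne_zero _))).const_smul _

theorem differentiableOn_tsum_mul_fwdDiff_iter_cpow {e : ℕ → ℂ} {C : ℝ} (he : ∀ n, ‖e n‖ ≤ C)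
    (K : ℕ) :
    DifferentiableOn ℂ
      (fun s : ℂ => ∑' n, e n * (Δ_[1])^[K] (fun m : ℕ => ((m : ℂ) + 1) ^ (-s)) n)
      {s | 1 - K < s.re} := by
  intro s₀ hs₀
  replace hs₀ : 1 - K < s₀.re := hs₀
  set σ := (s₀.re + 1 - K) / 2 with hσ
  have hσK : 1 - K < σ := by linarith
  set R := ‖s₀‖ + 1
  set U := {s : ℂ | σ < s.re} ∩ Metric.ball 0 R
  have hU : IsOpen U := (isOpen_lt continuous_const continuous_re).inter Metric.isOpen_ball
  have hs₀U : s₀ ∈ U := ⟨show σ < s₀.re by linarith, by simp [R]⟩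
  have hC : 0 ≤ C := (norm_nonneg _).trans (he 0)
  refine (DifferentiableOn.differentiableAt ?_ (hU.mem_nhds hs₀U)).differentiableWithinAt
  refine differentiableOn_tsum_of_summable_norm
    (((summable_nat_add_one_rpow (p := -(σ + K)) (by linarith)).mul_left
      (∏ i ∈ range K, (R + i))).mul_left C)
    (fun n => ((differentiable_fwdDiff_iter_cpow K n).const_mul (e n)).differentiableOn) hU
    (fun n s hs => ?_)
  have hσs : σ < s.re := hs.1
  have hsR : ‖s‖ < R := by simpa using hs.2
  rw [norm_mul]
  refine mul_le_mul (he n) ?_ (norm_nonneg _) hC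
  refine (norm_fwdDiff_iter_cpow_le (by linarith) n).trans ?_
  refine mul_le_mul (prod_le_prod (fun i _ => norm_nonneg _) fun i _ => ?_) ?_ (by positivity)
    (prod_nonneg fun i _ => by positivity)
  · exact (norm_add_le _ _).trans (by rw [RCLike.norm_natCast]; linarith)
  · exact Real.rpow_le_rpow_of_exponent_le (by linarith [(Nat.cast_nonneg n : (0 : ℝ) ≤ n)])
      (by linarith)

theorem eqOn_re_gt_of_eqOn_re_gt {f g : ℂ → ℂ} {a b : ℝ}
    (hf : DifferentiableOn ℂ f {s | a < s.re}) (hg : DifferentiableOn ℂ g {s | a < s.re})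
    (hab : a ≤ b) (hfg : ∀ s : ℂ, b < s.re → f s = g s) :
    Set.EqOn f g {s | a < s.re} := by
  have hopen : ∀ c : ℝ, IsOpen {s : ℂ | c < s.re} := fun c =>
    isOpen_lt continuous_const continuous_re
  refine (hf.analyticOnNhd (hopen a)).eqOn_of_preconnected_of_eventuallyEq
    (hg.analyticOnNhd (hopen a)) (convex_halfSpace_re_gt a).isPreconnected
    (z₀ := (b + 1 : ℝ)) (show a < ((b + 1 : ℝ) : ℂ).re by rw [ofReal_re]; linarith) ?_
  exact Filter.eventually_of_mem ((hopen b).mem_nhds (by simp)) hfg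

theorem MeanZeroPeriodic.eq_sum_abelMean_mul_fwdDiff_iter_pow {N : ℕ} {c : ℕ → ℂ}
    (hc : MeanZeroPeriodic N c) (hN : 0 < N) {L : ℂ → ℂ} (hL : Differentiable ℂ L)
    (hLs : ∀ s : ℂ, 1 < s.re → L s = ∑' n : ℕ, c n / ((n : ℂ) + 1) ^ s) {q K : ℕ}
    (hqK : q + 2 ≤ K) :
    L (-q) = ∑ j ∈ range K, abelMean N ((abelTransform N)^[j] c) *
      (Δ_[1])^[j] (fun m : ℕ => ((m : ℂ) + 1) ^ q) 0 := by
  set w : ℂ → ℕ → ℂ := fun s m => ((m : ℂ) + 1) ^ (-s)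
  obtain ⟨C, hC⟩ := (meanZeroPeriodic_iterate_abelTransform hc hN K).periodic.exists_norm_le hN
  have hcontinuation : Set.EqOn L (fun s => ∑ j ∈ range K, abelMean N ((abelTransform N)^[j] c) *
      (Δ_[1])^[j] (w s) 0 + ∑' n, (abelTransform N)^[K] c n * (Δ_[1])^[K] (w s) n)
      {s | 1 - K < s.re} := by
    refine eqOn_re_gt_of_eqOn_re_gt (b := 1) hL.differentiableOn
      (DifferentiableOn.add ?_ (differentiableOn_tsum_mul_fwdDiff_iter_cpow hC K))
      (sub_le_self _ K.cast_nonneg) fun s hs => ?_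
    · exact (Differentiable.fun_sum fun j _ =>
        (differentiable_fwdDiff_iter_cpow j 0).const_mul _).differentiableOn
    · simp only [hLs s hs, div_eq_mul_inv, ← cpow_neg]
      exact hc.tsum_mul_eq_sum_add_tsum hN (summable_norm_natCast_add_one_cpow_neg hs) K
  have hwq : w (-q) = fun m : ℕ => ((m : ℂ) + 1) ^ q := by simp [w]
  have hqK' : (q : ℝ) + 2 ≤ K := by exact_mod_cast hqK
  rw [hcontinuation (show 1 - (K : ℝ) < (-q : ℂ).re by rw [neg_re, natCast_re]; linarith)]
  simp [hwq, fwdDiff_iter_natCast_add_one_pow_eq_zero (by omega : q < K)]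

end DirichletSeries

section GaussianWeight

open Polynomial in
noncomputable def gaussDerivPoly : ℕ → ℂ[X]
  | 0 => X
  | k + 1 => derivative (gaussDerivPoly k) - C 2 * X * gaussDerivPoly k

theorem hasDerivAt_gaussDerivPoly_mul_cexp (k : ℕ) (u : ℝ) :
    HasDerivAt (fun u : ℝ => (gaussDerivPoly k).eval (u : ℂ) * cexp (-(u : ℂ) ^ 2))
      ((gaussDerivPoly (k + 1)).eval (u : ℂ) * cexp (-(u : ℂ) ^ 2)) u := by
  have hexp : HasDerivAt (fun z : ℂ => cexp (-z ^ 2)) (cexp (-(u : ℂ) ^ 2) * -(2 * (u : ℂ))) u := by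
    simpa using ((hasDerivAt_pow 2 (u : ℂ)).neg).cexp
  refine (((gaussDerivPoly k).hasDerivAt (u : ℂ)).mul hexp).comp_ofReal.congr_deriv ?_
  simp only [gaussDerivPoly, Polynomial.eval_sub, Polynomial.eval_mul, Polynomial.eval_C,
    Polynomial.eval_X]
  ring

theorem Polynomial.exists_norm_eval_mul_exp_neg_sq_le (p : ℂ[X]) :
    ∃ D, ∀ u : ℝ, 0 ≤ u → ‖p.eval (u : ℂ)‖ * Real.exp (-u ^ 2) ≤ D * Real.exp (-u) := by
  refine ⟨(∑ i ∈ range (p.natDegree + 1), ‖p.coeff i‖ * i !) * Real.exp 1, fun u hu => ?_⟩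
  have heval :
      ‖p.eval (u : ℂ)‖ ≤ (∑ i ∈ range (p.natDegree + 1), ‖p.coeff i‖ * i !) * Real.exp u := by
    rw [p.eval_eq_sum_range, sum_mul]
    refine (norm_sum_le _ _).trans (sum_le_sum fun i _ => ?_)
    rw [norm_mul, norm_pow, norm_real, Real.norm_of_nonneg hu, mul_assoc]
    gcongr
    have := Real.pow_div_factorial_le_exp u hu i
    rwa [div_le_iff₀ (by positivity), mul_comm] at this
  have hexp : Real.exp u * Real.exp (-u ^ 2) ≤ Real.exp 1 * Real.exp (-u) := by
    rw [← Real.exp_add, ← Real.exp_add, Real.exp_le_exp]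
    nlinarith [sq_nonneg (u - 1)]
  calc ‖p.eval (u : ℂ)‖ * Real.exp (-u ^ 2)
      ≤ (∑ i ∈ range (p.natDegree + 1), ‖p.coeff i‖ * i !) * Real.exp u * Real.exp (-u ^ 2) := by
        gcongr
    _ ≤ (∑ i ∈ range (p.natDegree + 1), ‖p.coeff i‖ * i !) * (Real.exp 1 * Real.exp (-u)) := by
        rw [mul_assoc]; gcongr
    _ = _ := by ring

noncomputable def gaussWeight (t y : ℝ) : ℂ := ((y : ℂ) + 1) * cexp (-(((y : ℂ) + 1) ^ 2 * t))

theorem exists_norm_fwdDiff_iter_gaussWeight_le (K : ℕ) :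
    ∃ D, 0 ≤ D ∧ ∀ t : ℝ, 0 < t → ∀ n : ℕ, ‖(Δ_[1])^[K] (fun m : ℕ => gaussWeight t m) n‖ ≤
      D * √t ^ K / √t * Real.exp (-(n + 1) * √t) := by
  obtain ⟨D, hD⟩ := (gaussDerivPoly K).exists_norm_eval_mul_exp_neg_sq_le
  have hD0 : 0 ≤ D := by
    simpa using (mul_nonneg (norm_nonneg _) (Real.exp_pos _).le).trans (hD 0 le_rfl)
  refine ⟨D, hD0, fun t ht n => ?_⟩
  set s := √t
  have hs : 0 < s := Real.sqrt_pos.mpr ht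
  -- `gaussWeight t y = G((y + 1) s) / s` with `G(u) = u e^{-u²}`, so `ψ k` is its `k`-th derivative
  set ψ : ℕ → ℝ → ℂ := fun k y => (s ^ k / s) •
    ((gaussDerivPoly k).eval (((y + 1) * s : ℝ) : ℂ) * cexp (-(((y + 1) * s : ℝ) : ℂ) ^ 2))
  have hψ0 : (fun m : ℕ => gaussWeight t m) = fun m : ℕ => ψ 0 m := by
    funext m
    have hst : ((s : ℂ)) ^ 2 = t := by exact_mod_cast Real.sq_sqrt ht.le
    simp only [ψ, gaussWeight, gaussDerivPoly, Polynomial.eval_X, pow_zero, Complex.real_smul]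
    push_cast
    have hs' : (s : ℂ) ≠ 0 := by exact_mod_cast hs.ne'
    rw [mul_pow, hst]
    field_simp
  rw [hψ0, fwdDiff_iter_natCast_apply]
  refine norm_fwdDiff_iter_le_of_hasDerivAt (a := 0)
    (β := fun y => D * s ^ K / s * Real.exp (-(y + 1) * s)) (fun x _ y _ hxy => ?_) K ψ
    (fun k _ x _ => ?_) (fun y hy => ?_) (Nat.cast_nonneg n)
  · exact mul_le_mul_of_nonneg_left (Real.exp_le_exp.mpr (by nlinarith)) (by positivity)
  · have hinner : HasDerivAt (fun y : ℝ => (y + 1) * s) s x := by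
      simpa using ((hasDerivAt_id x).add_const 1).mul_const s
    refine (((hasDerivAt_gaussDerivPoly_mul_cexp k ((x + 1) * s)).scomp x hinner).const_smul
      (s ^ k / s)).congr_deriv ?_
    simp only [ψ, smul_smul]
    congr 1
    ring
  · have hu : 0 ≤ (y + 1) * s := by positivity
    have hnorm : ‖cexp (-(((y + 1) * s : ℝ) : ℂ) ^ 2)‖ = Real.exp (-((y + 1) * s) ^ 2) := by
      rw [norm_exp, ← ofReal_pow, ← ofReal_neg, ofReal_re]
    simp only [ψ, norm_smul, norm_mul, hnorm, Real.norm_of_nonneg (by positivity : 0 ≤ s ^ K / s)]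
    calc s ^ K / s * (‖(gaussDerivPoly K).eval (((y + 1) * s : ℝ) : ℂ)‖ *
          Real.exp (-((y + 1) * s) ^ 2)) ≤ s ^ K / s * (D * Real.exp (-((y + 1) * s))) := by
          exact mul_le_mul_of_nonneg_left (hD _ hu) (by positivity)
      _ = D * s ^ K / s * Real.exp (-(y + 1) * s) := by ring_nf

theorem exists_hasSum_exp_neg_mul_succ_le {s : ℝ} (hs : 0 < s) :
    ∃ a ≤ 1 / s, HasSum (fun n : ℕ => Real.exp (-(n + 1) * s)) a := by
  set r := Real.exp (-s)
  have hr : r < 1 := Real.exp_lt_one_iff.mpr (by linarith)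
  refine ⟨r * (1 - r)⁻¹, ?_, ?_⟩
  · have hrs : r * (1 + s) ≤ 1 := by
      calc r * (1 + s) ≤ r * Real.exp s :=
            mul_le_mul_of_nonneg_left (by linarith [Real.add_one_le_exp s]) (Real.exp_pos _).le
        _ = 1 := by simp [r, ← Real.exp_add]
    rw [← div_eq_mul_inv, div_le_div_iff₀ (by linarith) hs]
    linarith
  · have hterm : ∀ n : ℕ, r * r ^ n = Real.exp (-(n + 1) * s) := fun n => by
      rw [← pow_succ', ← Real.exp_nat_mul]
      push_cast
      ring_nf
    simpa only [hterm] using (hasSum_geometric_of_lt_one (r := r) (Real.exp_pos _).le hr).mul_left r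

theorem summable_norm_gaussWeight {t : ℝ} (ht : 0 < t) :
    Summable fun n : ℕ => ‖gaussWeight t n‖ := by
  obtain ⟨D, -, hD⟩ := exists_norm_fwdDiff_iter_gaussWeight_le 0
  obtain ⟨a, -, ha⟩ := exists_hasSum_exp_neg_mul_succ_le (Real.sqrt_pos.mpr ht)
  exact Summable.of_nonneg_of_le (fun _ => norm_nonneg _) (hD t ht) (ha.summable.mul_left _)

theorem isBigO_tsum_mul_fwdDiff_iter_gaussWeight {e : ℕ → ℂ} {C : ℝ} (he : ∀ n, ‖e n‖ ≤ C)
    (M : ℕ) :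
    (fun t : ℝ => ∑' n, e n * (Δ_[1])^[2 * M + 4] (fun m : ℕ => gaussWeight t m) n)
      =O[𝓝[>] 0] fun t => t ^ (M + 1) := by
  obtain ⟨D, hD0, hD⟩ := exists_norm_fwdDiff_iter_gaussWeight_le (2 * M + 4)
  have hC : 0 ≤ C := (norm_nonneg _).trans (he 0)
  refine IsBigO.of_bound (C * D) (eventually_nhdsWithin_of_forall fun t (ht : 0 < t) => ?_)
  set s := √t
  have hs : 0 < s := Real.sqrt_pos.mpr ht
  obtain ⟨a, has, ha⟩ := exists_hasSum_exp_neg_mul_succ_le hs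
  calc ‖∑' n, e n * (Δ_[1])^[2 * M + 4] (fun m : ℕ => gaussWeight t m) n‖
      ≤ C * (D * s ^ (2 * M + 4) / s * a) :=
        tsum_of_norm_bounded ((ha.mul_left (D * s ^ (2 * M + 4) / s)).mul_left C) fun n => by
          rw [norm_mul]
          exact mul_le_mul (he n) (hD t ht n) (norm_nonneg _) hC
    _ ≤ C * (D * s ^ (2 * M + 4) / s * (1 / s)) := by gcongr
    _ = C * D * ‖t ^ (M + 1)‖ := by
        rw [Real.norm_of_nonneg (by positivity), show 2 * M + 4 = 2 * (M + 1) + 2 by ring, pow_add,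
          pow_mul, Real.sq_sqrt ht.le]
        field_simp
        rw [Real.sq_sqrt ht.le]

theorem isBigO_gaussWeight_sub_taylor (M k : ℕ) :
    (fun t : ℝ => gaussWeight t k - ∑ i ∈ range (M + 1),
        (-1) ^ i * (t : ℂ) ^ i / i ! * ((k : ℂ) + 1) ^ (2 * i + 1))
      =O[𝓝 0] fun t => t ^ (M + 1) := by
  set x : ℝ → ℂ := fun t => -(((k : ℂ) + 1) ^ 2 * t)
  have hx : Tendsto x (𝓝 0) (𝓝 0) := by
    simpa [x] using ((continuous_ofReal.const_mul (((k : ℂ) + 1) ^ 2)).fun_neg.tendsto 0)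
  have htaylor := ((Complex.exp_sub_sum_range_isBigO_pow (M + 1)).comp_tendsto hx).const_mul_left
    ((k : ℂ) + 1)
  have hpow : (fun t => x t ^ (M + 1)) =O[𝓝 0] fun t : ℝ => t ^ (M + 1) := by
    refine IsBigO.of_bound (‖((k : ℂ) + 1)‖ ^ (2 * (M + 1))) (Eventually.of_forall fun t => ?_)
    simp [x, norm_pow, mul_pow, ← pow_mul]
  refine (htaylor.trans hpow).congr_left fun t => ?_
  simp only [Function.comp_apply, x, gaussWeight, ofReal_natCast, mul_sub, mul_sum]
  congr 1
  refine sum_congr rfl fun i _ => ?_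
  rw [neg_pow, mul_pow, ← pow_mul]
  ring

end GaussianWeight

theorem MeanZeroPeriodic.isBigO_tsum_mul_gaussWeight_sub {N : ℕ} {c : ℕ → ℂ}
    (hc : MeanZeroPeriodic N c) (hN : 0 < N) {L : ℂ → ℂ} (hL : Differentiable ℂ L)
    (hLs : ∀ s : ℂ, 1 < s.re → L s = ∑' n : ℕ, c n / ((n : ℂ) + 1) ^ s) (M : ℕ) :
    (fun t : ℝ => ∑' n, c n * gaussWeight t n -
        ∑ i ∈ range (M + 1), (-1 : ℂ) ^ i * L (-2 * (i : ℂ) - 1) * (t : ℂ) ^ i / (i ! : ℂ))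
      =O[𝓝[>] 0] fun t => t ^ (M + 1) := by
  -- `K = 2M + 4` makes the remainder `O(√t ^ (K - 2)) = O(t ^ (M + 1))`
  set K := 2 * M + 4
  set a : ℕ → ℂ := fun j => abelMean N ((abelTransform N)^[j] c)
  set taylor : ℝ → ℕ → ℂ := fun t m =>
    ∑ i ∈ range (M + 1), (-1) ^ i * (t : ℂ) ^ i / i ! * ((m : ℂ) + 1) ^ (2 * i + 1)
  obtain ⟨C, hC⟩ := (meanZeroPeriodic_iterate_abelTransform hc hN K).periodic.exists_norm_le hN
  have hLvalues : ∀ t : ℝ, ∑ i ∈ range (M + 1), (-1 : ℂ) ^ i * L (-2 * (i : ℂ) - 1) * (t : ℂ) ^ i /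
      (i ! : ℂ) = ∑ j ∈ range K, a j * (Δ_[1])^[j] (taylor t) 0 := by
    intro t
    simp only [taylor, fwdDiff_iter_sum_mul_apply, mul_sum]
    rw [sum_comm]
    refine sum_congr rfl fun i hi => ?_
    have hq : -2 * (i : ℂ) - 1 = -((2 * i + 1 : ℕ) : ℂ) := by push_cast; ring
    rw [hq, hc.eq_sum_abelMean_mul_fwdDiff_iter_pow hN hL hLs (K := K)
      (by rw [mem_range] at hi; omega), mul_sum, sum_mul, sum_div]
    exact sum_congr rfl fun j _ => by ring
  have hsplit : ∀ᶠ t in 𝓝[>] (0 : ℝ),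
      ∑' n, (abelTransform N)^[K] c n * (Δ_[1])^[K] (fun m : ℕ => gaussWeight t m) n +
        ∑ j ∈ range K, a j * ((Δ_[1])^[j] (fun m : ℕ => gaussWeight t m) 0 -
          (Δ_[1])^[j] (taylor t) 0) =
      ∑' n, c n * gaussWeight t n -
        ∑ i ∈ range (M + 1), (-1 : ℂ) ^ i * L (-2 * (i : ℂ) - 1) * (t : ℂ) ^ i / (i ! : ℂ) := by
    filter_upwards [self_mem_nhdsWithin] with t ht
    rw [hLvalues, hc.tsum_mul_eq_sum_add_tsum hN (summable_norm_gaussWeight ht) K]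
    simp only [mul_sub, sum_sub_distrib]
    ring
  refine IsBigO.congr' ?_ hsplit EventuallyEq.rfl
  exact (isBigO_tsum_mul_fwdDiff_iter_gaussWeight hC M).add (IsBigO.fun_sum fun j _ =>
    (isBigO_fwdDiff_iter_sub (f := fun t (m : ℕ) => gaussWeight t m) (g := taylor)
      (fun k => (isBigO_gaussWeight_sub_taylor M k).mono nhdsWithin_le_nhds) j 0).const_mul_left
      (a j))

theorem partial_theta_asymptotic (χ : ℤ → ℂ) (M₀ : ℕ) (hM₀ : 0 < M₀)
    (hper : ∀ n : ℤ, χ (n + M₀) = χ n)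
    (hmean : ∑ n ∈ Finset.range M₀, χ (n + 1) = 0)
    (L : ℂ → ℂ) (hL : Differentiable ℂ L)
    (hLs : ∀ s : ℂ, 1 < s.re → L s = ∑' n : ℕ, χ (n + 1) / ((n : ℂ) + 1) ^ s) :
    ∀ M : ℕ,
      (fun t : ℝ =>
          (∑' n : ℕ, ((n : ℂ) + 1) * χ (n + 1) *
              Complex.exp (-(((n : ℂ) + 1) ^ 2 * (t : ℂ)))) -
            ∑ n ∈ Finset.range (M + 1),
              (-1 : ℂ) ^ n * L (-2 * (n : ℂ) - 1) * (t : ℂ) ^ n / (n.factorial : ℂ))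
        =O[nhdsWithin 0 (Set.Ioi 0)] fun t : ℝ => t ^ (M + 1) := by
  intro M
  have hχ : MeanZeroPeriodic M₀ fun n : ℕ => χ (n + 1) :=
    ⟨fun n => by simpa [add_right_comm] using hper (n + 1), hmean⟩
  refine (hχ.isBigO_tsum_mul_gaussWeight_sub hM₀ hL hLs M).congr_left fun t => ?_
  simp only [gaussWeight, ofReal_natCast]
  congr 1
  exact tsum_congr fun n => by ring
end
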